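/- Consider the linear program: minimize $4 y_3$ over reals $l_1, l_2, l_3, l_4, y_3$ subject to $5 y_3 = l_1 + l_2 + l_3 + l_4$, $l_1 + 4y_3 \geq -1$, $l_2 + 4y_3 \geq 4$, $l_3 + 4y_3 \geq -6$, $l_4 + 4y_3 \geq 4$, $0 \leq y_3 \leq 1$, and $l_1, l_2, l_3, l_4 \geq 0$. The optimal value is $32/13$, attained at $(l_1, l_2, l_3, l_4, y_3) = (0, 20/13, 0, 20/13, 8/13)$. -/

import Mathlib

/-- Feasibility for the dual linear program in dimension 5. -/
def Feasible5 (l1 l2 l3 l4 y3 : ℝ) : Prop :=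
  5 * y3 = l1 + l2 + l3 + l4 ∧ l1 + 4 * y3 ≥ -1 ∧ l2 + 4 * y3 ≥ 4 ∧
    l3 + 4 * y3 ≥ -6 ∧ l4 + 4 * y3 ≥ 4 ∧
    0 ≤ y3 ∧ y3 ≤ 1 ∧ 0 ≤ l1 ∧ 0 ≤ l2 ∧ 0 ≤ l3 ∧ 0 ≤ l4

theorem feasible5_optimum : Feasible5 0 (20 / 13) 0 (20 / 13) (8 / 13) := by
  norm_num [Feasible5]

theorem Feasible5.eight_div_thirteen_le {l1 l2 l3 l4 y3 : ℝ} (h : Feasible5 l1 l2 l3 l4 y3) :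
    8 / 13 ≤ y3 := by
  obtain ⟨hsum, -, hl2, -, hl4, -, -, hl1, -, hl3, -⟩ := h
  have : 8 - 8 * y3 ≤ 5 * y3 :=
    calc 8 - 8 * y3 ≤ l2 + l4 := by linarith
      _ ≤ l1 + l2 + l3 + l4 := by linarith
      _ = 5 * y3 := hsum.symm
  linarith

theorem lp_dim_five :
    Feasible5 0 (20 / 13) 0 (20 / 13) (8 / 13) ∧ 4 * (8 / 13 : ℝ) = 32 / 13 ∧
      ∀ l1 l2 l3 l4 y3 : ℝ, Feasible5 l1 l2 l3 l4 y3 → 32 / 13 ≤ 4 * y3 :=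
  ⟨feasible5_optimum, by norm_num, fun _ _ _ _ _ h => by linarith [h.eight_div_thirteen_le]⟩
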